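/- Let μ > 0, η > 0, c₀ > 0. There exist C > 0 and t₀ ≥ 1 such that for all t ≥ t₀, ∫₀^{η√t} e^{-μr²} cos²(r√t) r² dr ≥ C. Consequently, t^{-3/2} ∫₀^{η√t} e^{-μr²} cos²(r√t) r² dr ≥ C(1+t)^{-3/2} for t ≥ t₀. -/
import Mathlib

open Real intervalIntegral

/-- Lower bound on the oscillatory Gaussian integral:
there are `C > 0` and `t₀ ≥ 1` with
`∫₀^{η√t} e^{-μr²} cos²(r√t) r² dr ≥ C` for all `t ≥ t₀`, and consequently
`t^{-3/2} ∫₀^{η√t} e^{-μr²} cos²(r√t) r² dr ≥ C (1+t)^{-3/2}`. -/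
theorem stmt9 (μ η c₀ : ℝ) (hμ : 0 < μ) (hη : 0 < η) (hc₀ : 0 < c₀) :
    ∃ C > 0, ∃ t₀ : ℝ, 1 ≤ t₀ ∧ ∀ t : ℝ, t₀ ≤ t →
      C ≤ (∫ r in (0 : ℝ)..(η * Real.sqrt t),
            Real.exp (-μ * r ^ 2) * Real.cos (r * Real.sqrt t) ^ 2 * r ^ 2) ∧
      C * (1 + t) ^ (-(3 / 2 : ℝ)) ≤
        t ^ (-(3 / 2 : ℝ)) * (∫ r in (0 : ℝ)..(η * Real.sqrt t),
            Real.exp (-μ * r ^ 2) * Real.cos (r * Real.sqrt t) ^ 2 * r ^ 2) := by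
  refine ⟨Real.exp (-μ * η ^ 2) * (η / 2) ^ 2 * (η / 8), by positivity,
    max 1 (64 / η ^ 2), le_max_left _ _, ?_⟩
  intro t ht
  have ht1 : (1 : ℝ) ≤ t := le_trans (le_max_left _ _) ht
  have ht0 : 0 < t := by linarith
  set s := Real.sqrt t with hs
  have hs1 : 1 ≤ s := by
    rw [hs, show (1 : ℝ) = Real.sqrt 1 by simp]
    exact Real.sqrt_le_sqrt ht1
  have hs0 : 0 < s := by linarith
  have hs8 : 8 / η ≤ s := by
    have h64 : 64 / η ^ 2 ≤ t := le_trans (le_max_right _ _) ht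
    have := Real.sqrt_le_sqrt h64
    rwa [show (64 / η ^ 2 : ℝ) = (8 / η) ^ 2 by field_simp; ring,
      Real.sqrt_sq (by positivity)] at this
  have hinv : 1 / s ≤ η / 8 := by
    rw [div_le_div_iff₀ hs0 (by norm_num)]
    have h8 : (8 / η) * η = 8 := by field_simp
    have := mul_le_mul_of_nonneg_right hs8 hη.le
    linarith
  set f : ℝ → ℝ := fun r => Real.exp (-μ * r ^ 2) * Real.cos (r * s) ^ 2 * r ^ 2 with hf
  have hfc : Continuous f := by fun_prop
  have hfnn : ∀ r, 0 ≤ f r := fun r => by positivity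
  have hηs : η ≤ η * s := le_mul_of_one_le_right hη.le hs1
  -- split the integral
  have hsplit1 : (∫ r in (0:ℝ)..(η * s), f r)
      = (∫ r in (0:ℝ)..(η/2), f r) + ((∫ r in (η/2)..η, f r) + (∫ r in η..(η*s), f r)) := by
    rw [integral_add_adjacent_intervals (hfc.intervalIntegrable _ _) (hfc.intervalIntegrable _ _),
      integral_add_adjacent_intervals (hfc.intervalIntegrable _ _) (hfc.intervalIntegrable _ _)]
  have h1 : 0 ≤ ∫ r in (0:ℝ)..(η/2), f r :=
    integral_nonneg (by positivity) (fun x _ => hfnn x)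
  have h3 : 0 ≤ ∫ r in η..(η*s), f r :=
    integral_nonneg hηs (fun x _ => hfnn x)
  -- lower bound on the middle piece
  have hmid : Real.exp (-μ * η ^ 2) * (η / 2) ^ 2 * (η / 8) ≤ ∫ r in (η/2)..η, f r := by
    have hgle : ∀ x ∈ Set.Icc (η/2) η,
        Real.exp (-μ * η ^ 2) * (η / 2) ^ 2 * Real.cos (x * s) ^ 2 ≤ f x := by
      intro x hx
      have hx1 : η / 2 ≤ x := hx.1
      have hx2 : x ≤ η := hx.2
      have hexp : Real.exp (-μ * η ^ 2) ≤ Real.exp (-μ * x ^ 2) := by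
        apply Real.exp_le_exp.2
        have hx2' : x ^ 2 ≤ η ^ 2 := by nlinarith
        nlinarith [mul_le_mul_of_nonneg_left hx2' hμ.le]
      have hsq : (η / 2) ^ 2 ≤ x ^ 2 := by nlinarith
      have hcos : (0:ℝ) ≤ Real.cos (x * s) ^ 2 := sq_nonneg _
      calc Real.exp (-μ * η ^ 2) * (η / 2) ^ 2 * Real.cos (x * s) ^ 2
          ≤ Real.exp (-μ * x ^ 2) * x ^ 2 * Real.cos (x * s) ^ 2 := by
            apply mul_le_mul_of_nonneg_right _ hcos
            exact mul_le_mul hexp hsq (by positivity) (Real.exp_pos _).le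
        _ = f x := by rw [hf]; ring
    have hmono : (∫ r in (η/2)..η, Real.exp (-μ * η ^ 2) * (η / 2) ^ 2 * Real.cos (r * s) ^ 2)
        ≤ ∫ r in (η/2)..η, f r := by
      apply integral_mono_on (by linarith)
        (Continuous.intervalIntegrable (by fun_prop) _ _)
        (hfc.intervalIntegrable _ _) hgle
    have hcossq : η / 8 ≤ ∫ r in (η/2)..η, Real.cos (r * s) ^ 2 := by
      have hcomp : (∫ r in (η/2)..η, Real.cos (r * s) ^ 2)
          = s⁻¹ • ∫ x in (η/2 * s)..(η * s), Real.cos x ^ 2 :=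
        integral_comp_mul_right (fun x => Real.cos x ^ 2) (ne_of_gt hs0)
      rw [hcomp, integral_cos_sq, smul_eq_mul]
      have b1 : -1 ≤ Real.cos (η * s) * Real.sin (η * s) := by
        nlinarith [Real.neg_one_le_cos (η*s), Real.cos_le_one (η*s),
          Real.neg_one_le_sin (η*s), Real.sin_le_one (η*s)]
      have b2 : Real.cos (η/2 * s) * Real.sin (η/2 * s) ≤ 1 := by
        nlinarith [Real.neg_one_le_cos (η/2*s), Real.cos_le_one (η/2*s),
          Real.neg_one_le_sin (η/2*s), Real.sin_le_one (η/2*s)]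
      have key : η / 4 - 1 / s ≤ s⁻¹ * ((Real.cos (η*s) * Real.sin (η*s)
          - Real.cos (η/2*s) * Real.sin (η/2*s) + η * s - η/2 * s) / 2) := by
        rw [inv_eq_one_div, div_mul_eq_mul_div, one_mul, le_div_iff₀ hs0]
        have : (Real.cos (η*s) * Real.sin (η*s) - Real.cos (η/2*s) * Real.sin (η/2*s)
            + η * s - η/2 * s) / 2 ≥ (-2 + η * s / 2) / 2 := by
          have hhalf : η/2 * s = η * s / 2 := by ring
          linarith
        have h1s : (1 / s) * s = 1 := by field_simp
        nlinarith
      have : η / 4 - 1 / s ≥ η / 8 := by linarith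
      linarith [key]
    calc Real.exp (-μ * η ^ 2) * (η / 2) ^ 2 * (η / 8)
        ≤ Real.exp (-μ * η ^ 2) * (η / 2) ^ 2 * ∫ r in (η/2)..η, Real.cos (r * s) ^ 2 := by
          apply mul_le_mul_of_nonneg_left hcossq (by positivity)
      _ = ∫ r in (η/2)..η, Real.exp (-μ * η ^ 2) * (η / 2) ^ 2 * Real.cos (r * s) ^ 2 := by
          rw [← intervalIntegral.integral_const_mul]
      _ ≤ _ := hmono
  have hmain : Real.exp (-μ * η ^ 2) * (η / 2) ^ 2 * (η / 8) ≤ ∫ r in (0:ℝ)..(η * s), f r := by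
    rw [hsplit1]; linarith
  refine ⟨hmain, ?_⟩
  have hI0 : 0 ≤ ∫ r in (0:ℝ)..(η * s), f r := by
    apply integral_nonneg (by positivity) (fun x _ => hfnn x)
  have hrpow : (1 + t) ^ (-(3/2 : ℝ)) ≤ t ^ (-(3/2 : ℝ)) :=
    Real.rpow_le_rpow_of_nonpos ht0 (by linarith) (by norm_num)
  calc Real.exp (-μ * η ^ 2) * (η / 2) ^ 2 * (η / 8) * (1 + t) ^ (-(3/2 : ℝ))
      ≤ (∫ r in (0:ℝ)..(η * s), f r) * t ^ (-(3/2 : ℝ)) := by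
        apply mul_le_mul hmain hrpow (by positivity) hI0
    _ = t ^ (-(3/2 : ℝ)) * ∫ r in (0:ℝ)..(η * s), f r := mul_comm _ _
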